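/- arXiv:2006.04167 — 2 statements merged into one kernel-verified Lean document; each statement's English description precedes it below -/
import Mathlib

section
/- Let q = q_{0r} be a right-periodic twinless path 1-CQ with r ≥ 2, Q = (cov_A, q), and C ∈ K_Q^min. Call a node of C a T-copy if it is a copy of one of the T-nodes x_1, …, x_r of q; in C every T-copy is either labelled A (if it was budded), labelled T, or unlabelled (if it was pruned). Then: if some T-copy u is unlabelled in C, there is no T-copy v labelled by T such that there is a directed path from u to v in C. -/
/-!
Call a node anchored if it is reachable from the `F`-node `x0` or from a `T`-copy. Every cactus
keeps four features of `q`: `F` occurs only at `x0`; a potential modulo the period `p` increases by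
one along every edge and vanishes on the anchors; two distinct anchored nodes never share a
successor; and `x0` has no anchored predecessor.

Let `u` be an unlabelled `T`-copy below which some `T`-copy `v` is labelled `T`. Given a minimal
model, switch every strict descendant of `u` to `T` and take a homomorphism of `q` into the
resulting model. It enters the descendants of `u` only by an edge out of `u`, and comparing
potentials, `u` is then the image of `x0` or of a `T`-node of `q`, so it would carry a label. Hence
no `T`-node of `q` is mapped below `u`, the same homomorphism works without `T(v)`, and pruning
`T(v)` yields a smaller cactus, against minimality.
-/

attribute [local instance] Classical.propDecidable

namespace DS

/-- Ground/query atoms over binary-predicate alphabet `σ` and node type `α`: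
unary predicates `F`, `T`, `A` and binary predicates `R r`. -/
inductive At (σ α : Type) : Type
  | F : α → At σ α
  | T : α → At σ α
  | A : α → At σ α
  | R : σ → α → α → At σ α

namespace At

/-- Renaming of the nodes of an atom. -/
def map {σ α β : Type} (h : α → β) : At σ α → At σ β
  | .F a => .F (h a)
  | .T a => .T (h a)
  | .A a => .A (h a)
  | .R r a b => .R r (h a) (h b)

/-- The nodes occurring in an atom. -/
def vars {σ α : Type} : At σ α → Set α
  | .F a => {a}
  | .T a => {a}
  | .A a => {a}
  | .R _ a b => {a, b}

end At

/-- An interpretation over domain `δ`. -/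
structure Interp (σ δ : Type) where
  FS : δ → Prop
  TS : δ → Prop
  AS : δ → Prop
  RS : σ → δ → δ → Prop

/-- Truth of an atom in an interpretation. -/
def Interp.satAt {σ δ : Type} (I : Interp σ δ) : At σ δ → Prop
  | .F a => I.FS a
  | .T a => I.TS a
  | .A a => I.AS a
  | .R r a b => I.RS r a b

/-- `I ⊨ q`: there is a homomorphism from the Boolean CQ `q` into `I`. -/
def Interp.satCQ {σ δ V : Type} (I : Interp σ δ) (q : Set (At σ V)) : Prop :=
  ∃ h : V → δ, ∀ a ∈ q, I.satAt (At.map h a)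

/-- An ABox viewed as an interpretation over its own individuals. -/
def toInterp {σ α : Type} (A : Set (At σ α)) : Interp σ α where
  FS a := At.F a ∈ A
  TS a := At.T a ∈ A
  AS a := At.A a ∈ A
  RS r a b := At.R r a b ∈ A

/-- An individual is undecided if it is labelled `A` but neither `F` nor `T`. -/
def undecided {σ α : Type} (A : Set (At σ α)) (a : α) : Prop :=
  At.A a ∈ A ∧ At.F a ∉ A ∧ At.T a ∉ A

/-- The minimal model of `cov_A` and the ABox `A` determined by a choice `c` of
one of `F`/`T` for each undecided `A`-individual. -/
def minModel {σ α : Type} (A : Set (At σ α)) (c : α → Bool) : Interp σ α where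
  FS a := At.F a ∈ A ∨ (undecided A a ∧ c a = true)
  TS a := At.T a ∈ A ∨ (undecided A a ∧ c a = false)
  AS a := At.A a ∈ A
  RS r a b := At.R r a b ∈ A

/-- `F` and `T` are interpreted disjointly. -/
def disjointFT {σ δ : Type} (I : Interp σ δ) : Prop := ∀ d : δ, ¬ (I.FS d ∧ I.TS d)

/-- Certain answer to the OMQ `(cov_A, q)` over the ABox `A`:
`q` holds in every minimal model of `cov_A` and `A`. -/
def covACert {σ α V : Type} (A : Set (At σ α)) (q : Set (At σ V)) : Prop :=
  ∀ c : α → Bool, (minModel A c).satCQ q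

/-- Certain answer to the OMQ `(cov_A^⊥, q)` over the ABox `A`:
`q` holds in every minimal model of `cov_A^⊥` and `A` (the minimal models of
`cov_A` in which `F` and `T` are disjoint). -/
def covABotCert {σ α V : Type} (A : Set (At σ α)) (q : Set (At σ V)) : Prop :=
  ∀ c : α → Bool, disjointFT (minModel A c) → (minModel A c).satCQ q

/-- No `FT`-twin occurs. -/
def twinFree {σ α : Type} (A : Set (At σ α)) : Prop :=
  ∀ a : α, ¬ (At.F a ∈ A ∧ At.T a ∈ A)

/-- A CQ does not use the unary predicate `A`. -/
def noA {σ V : Type} (q : Set (At σ V)) : Prop := ∀ v : V, At.A v ∉ q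

/-- `x` occurs in `q`. -/
def occ {σ V : Type} (q : Set (At σ V)) (x : V) : Prop := ∃ a ∈ q, x ∈ At.vars a

/-- Connectedness of a CQ. -/
def connCQ {σ V : Type} (q : Set (At σ V)) : Prop :=
  ∀ x y : V, occ q x → occ q y →
    Relation.ReflTransGen (fun u v => ∃ a ∈ q, u ∈ At.vars a ∧ v ∈ At.vars a) x y

/-- Solitary `F`-node of a CQ. -/
def solF {σ V : Type} (q : Set (At σ V)) (x : V) : Prop := At.F x ∈ q ∧ At.T x ∉ q

/-- Solitary `T`-node of a CQ. -/
def solT {σ V : Type} (q : Set (At σ V)) (y : V) : Prop := At.T y ∈ q ∧ At.F y ∉ q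
/-- The path CQ with `m` edges labelled `ρ 0, …, ρ (m-1)` along the nodes
`0, 1, …, m`, whose `F`-nodes are the elements of `FL` and whose `T`-nodes are
the elements of `TL`. -/
def pathCQ (σ : Type) (m : ℕ) (ρ : ℕ → σ) (FL TL : Set ℕ) : Set (At σ ℕ) :=
  {a | (∃ i, i < m ∧ a = At.R (ρ i) i (i + 1)) ∨
       (∃ i ∈ FL, a = At.F i) ∨ (∃ i ∈ TL, a = At.T i)}
/-- A twinless path `1`-CQ `q = q_{0r}` (single `F`-node `x0`, all `T`-nodes
after it) is right-periodic: either `r = 1`, or the `T`-nodes succeeding `x0`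
are `x0 + p, x0 + 2p, …, x0 + r·p` for some period `p` and the word of edge
labels is periodic with period `p` from `x0` onwards (which encodes
`r_1 = … = r_r` and `r_{r+1} = (r_1)^k λ` for a prefix `λ` of `r_1`). -/
def rightPeriodic (σ : Type) (m x0 : ℕ) (ρ : ℕ → σ) (TL : Set ℕ) : Prop :=
  (∀ t ∈ TL, x0 < t) ∧
  (TL.ncard = 1 ∨
    ∃ p, 0 < p ∧ TL = {x | ∃ k, 1 ≤ k ∧ k ≤ TL.ncard ∧ x = x0 + k * p} ∧
      ∀ i, x0 ≤ i → i + p < m → ρ (i + p) = ρ i)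

/-- The mirror image of `rightPeriodic`: all `T`-nodes precede the single
`F`-node `x0` and the labels are periodic towards the left end. -/
def leftPeriodic (σ : Type) (m x0 : ℕ) (ρ : ℕ → σ) (TL : Set ℕ) : Prop :=
  (∀ t ∈ TL, t < x0) ∧
  (TL.ncard = 1 ∨
    ∃ p, 0 < p ∧ TL = {x | ∃ k, 1 ≤ k ∧ k ≤ TL.ncard ∧ x + k * p = x0} ∧
      ∀ i, i + p < x0 → ρ (i + p) = ρ i)
/-- The class `K_Q^+` of cactuses for `Q = (cov_A, q)` (`q` a `1`-CQ over the
variables `ℕ` with unique solitary `F`-node `x`), together with bookkeeping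
data: the skeleton `S` (the set of addresses of segments, an address being the
list of budded nodes leading to the segment), the segment address `seg v` of
each node `v`, and the set `tc` of `T`-copies (copies of solitary `T`-nodes of
`q`).  Rule `bud` is budding; rule `prune` removes a solitary `T(y)` provided
the result still entails `q` under `cov_A` (the skeleton is unchanged). -/
inductive CacP {σ : Type} (q : Set (At σ ℕ)) (x : ℕ) :
    Set (At σ ℕ) → Set (List ℕ) → (ℕ → List ℕ) → Set ℕ → Prop
  | base : CacP q x q {[]} (fun _ => []) {v | solT q v}
  | bud (C : Set (At σ ℕ)) (S : Set (List ℕ)) (seg : ℕ → List ℕ) (tc : Set ℕ)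
      (hC : CacP q x C S seg tc) (y : ℕ)
      (hyT : At.T y ∈ C) (hyF : At.F y ∉ C)
      (ρ : ℕ → ℕ) (hinj : Function.Injective ρ) (hρx : ρ x = y)
      (hfresh : ∀ v : ℕ, v ≠ x → ¬ occ C (ρ v)) :
      CacP q x ((C \ {At.T y}) ∪ At.map ρ '' (insert (At.A x) (q \ {At.F x})))
        (insert (seg y ++ [y]) S)
        (fun v => if v ∈ Set.range ρ ∧ v ≠ y then seg y ++ [y] else seg v)
        (tc ∪ ρ '' {v | solT q v})
  | prune (C : Set (At σ ℕ)) (S : Set (List ℕ)) (seg : ℕ → List ℕ) (tc : Set ℕ)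
      (hC : CacP q x C S seg tc) (y : ℕ)
      (hyT : At.T y ∈ C) (hyF : At.F y ∉ C)
      (hent : covACert (C \ {At.T y}) q) :
      CacP q x (C \ {At.T y}) S seg tc

/-- `s` and `t` are incomparable nodes of a skeleton (neither is an ancestor,
i.e. a prefix, of the other). -/
def incomp (s t : List ℕ) : Prop := ¬ s <+: t ∧ ¬ t <+: s

/-- The full binary tree of depth `d` is a minor of the skeleton `S`: there is a
topological embedding sending each node of the binary tree (a `Bool`-word of
length at most `d`) to a node of `S`, children to strict descendants, and the
two children of a node to incomparable nodes. -/
def binMinor (S : Set (List ℕ)) (d : ℕ) : Prop :=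
  ∃ e : List Bool → List ℕ,
    (∀ l : List Bool, l.length ≤ d → e l ∈ S) ∧
    (∀ (l : List Bool) (b : Bool), l.length < d →
      e l <+: e (l ++ [b]) ∧ e l ≠ e (l ++ [b])) ∧
    (∀ l : List Bool, l.length < d → incomp (e (l ++ [true])) (e (l ++ [false])))

/-- The branching number of the skeleton `S` is at most `n`: the largest full
binary tree that is a minor of `S` has depth at most `n`. -/
def brLE (S : Set (List ℕ)) (n : ℕ) : Prop := ¬ binMinor S (n + 1)

section Reachability

variable {α : Type*}

def Anchored (E : α → α → Prop) (A : Set α) (w : α) : Prop :=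
  ∃ a ∈ A, Relation.ReflTransGen E a w

variable {E : α → α → Prop} {A : Set α}

lemma anchored_of_mem {a : α} (ha : a ∈ A) : Anchored E A a := ⟨a, ha, .refl⟩

lemma Anchored.tail {a b : α} (ha : Anchored E A a) (hab : Relation.ReflTransGen E a b) :
    Anchored E A b :=
  let ⟨c, hc, hca⟩ := ha
  ⟨c, hc, hca.trans hab⟩

lemma eq_of_edge_into_descendants
    (huniq : ∀ a b c, E a c → E b c → Anchored E A a → Anchored E A b → a = b)
    {u a b : α} (hu : u ∈ A) (ha : Anchored E A a) (hab : E a b)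
    (hub : Relation.TransGen E u b) (hua : ¬ Relation.TransGen E u a) : a = u := by
  obtain ⟨c, huc, hcb⟩ := Relation.TransGen.tail'_iff.1 hub
  obtain rfl := huniq a c b hab hcb ha ((anchored_of_mem hu).tail huc)
  rcases huc.cases_tail with rfl | ⟨d, hud, hda⟩
  · rfl
  · exact absurd (Relation.TransGen.tail' hud hda) hua

lemma reflTransGen_of_chain {g : ℕ → α} {m : ℕ} (hg : ∀ i < m, E (g i) (g (i + 1)))
    {i j : ℕ} (hij : i ≤ j) (hjm : j ≤ m) : Relation.ReflTransGen E (g i) (g j) := by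
  induction j, hij using Nat.le_induction with
  | base => exact .refl
  | succ j _ ih => exact (ih (by omega)).tail (hg j (by omega))

lemma potential_add_of_chain {M : Type*} [AddCommMonoidWithOne M] {φ : α → M}
    (hφ : ∀ a b, E a b → φ b = φ a + 1) {g : ℕ → α} {m : ℕ}
    (hg : ∀ i < m, E (g i) (g (i + 1))) {i j : ℕ} (hij : i ≤ j) (hjm : j ≤ m) :
    φ (g j) + i = φ (g i) + j := by
  induction j, hij using Nat.le_induction with
  | base => rfl
  | succ j _ ih =>
    rw [hφ _ _ (hg j (by omega)), Nat.cast_succ, ← add_assoc, ← ih (by omega), add_right_comm]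

end Reachability

lemma Nat.exists_not_and_succ_of_le {P : ℕ → Prop} {a b : ℕ} (hab : a ≤ b) (ha : ¬ P a) (hb : P b) :
    ∃ l, a ≤ l ∧ l < b ∧ ¬ P l ∧ P (l + 1) := by
  induction b, hab using Nat.le_induction with
  | base => exact absurd hb ha
  | succ b hab ih =>
    by_cases hPb : P b
    · obtain ⟨l, hal, hlb, hl⟩ := ih hPb
      exact ⟨l, hal, by omega, hl⟩
    · exact ⟨b, hab, by omega, hPb, hb⟩

section Basic

variable {σ : Type}

lemma At.map_id {α : Type} : At.map (σ := σ) (id : α → α) = id := by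
  funext a
  cases a <;> rfl

def Edge (C : Set (At σ ℕ)) (a b : ℕ) : Prop := ∃ s, At.R s a b ∈ C

variable {C : Set (At σ ℕ)}

lemma occ_of_mem {a : At σ ℕ} (h : a ∈ C) {x : ℕ} (hx : x ∈ a.vars) : occ C x := ⟨a, h, hx⟩

lemma Edge.occ_left {a b : ℕ} (h : Edge C a b) : occ C a :=
  occ_of_mem h.choose_spec (by simp [At.vars])

lemma Edge.occ_right {a b : ℕ} (h : Edge C a b) : occ C b :=
  occ_of_mem h.choose_spec (by simp [At.vars])

lemma occ_of_reflTransGen {a b : ℕ} (h : Relation.ReflTransGen (Edge C) a b) (hb : occ C b) :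
    occ C a := by
  rcases h.cases_head with rfl | ⟨c, hac, _⟩
  · exact hb
  · exact hac.occ_left

lemma satAt_minModel_of_mem {a : At σ ℕ} (ha : a ∈ C) (c : ℕ → Bool) :
    (minModel C c).satAt a := by
  cases a
  all_goals first | exact Or.inl ha | exact ha

@[simp]
lemma edge_sdiff_T (y : ℕ) : Edge (C \ {At.T y}) = Edge C := by
  ext a b
  simp [Edge]

lemma labelled_of_minModel {c : ℕ → Bool} {d : ℕ}
    (h : (minModel C c).FS d ∨ (minModel C c).TS d) :
    At.F d ∈ C ∨ At.T d ∈ C ∨ At.A d ∈ C := by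
  simp only [minModel, undecided] at h
  tauto

lemma minModel_sdiff_T {v d : ℕ} {c c' : ℕ → Bool} (hd : d ≠ v) (hc : c d = c' d) :
    ((minModel (C \ {At.T v}) c).FS d ↔ (minModel C c').FS d) ∧
      ((minModel (C \ {At.T v}) c).TS d ↔ (minModel C c').TS d) := by
  simp [minModel, undecided, hd, hc]

variable {m x0 : ℕ} {ρ : ℕ → σ} {TL : Set ℕ}

lemma mem_pathCQ {a : At σ ℕ} :
    a ∈ pathCQ σ m ρ {x0} TL ↔
      (∃ i < m, a = At.R (ρ i) i (i + 1)) ∨ a = At.F x0 ∨ ∃ t ∈ TL, a = At.T t := by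
  simp [pathCQ]

lemma F_mem_pathCQ_iff {a : ℕ} : At.F a ∈ pathCQ σ m ρ {x0} TL ↔ a = x0 := by
  simp [pathCQ, eq_comm]

lemma T_mem_pathCQ_iff {a : ℕ} : At.T a ∈ pathCQ σ m ρ {x0} TL ↔ a ∈ TL := by
  simp [pathCQ]

lemma A_notMem_pathCQ {a : ℕ} : At.A a ∉ pathCQ σ m ρ {x0} TL := by
  simp [pathCQ]

lemma R_mem_pathCQ {i : ℕ} (hi : i < m) : At.R (ρ i) i (i + 1) ∈ pathCQ σ m ρ {x0} TL :=
  Or.inl ⟨i, hi, rfl⟩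

lemma edge_pathCQ_iff {a b : ℕ} : Edge (pathCQ σ m ρ {x0} TL) a b ↔ a < m ∧ b = a + 1 := by
  simp [Edge, pathCQ]

lemma setOf_solT_pathCQ (hx0 : x0 ∉ TL) : {v | solT (pathCQ σ m ρ {x0} TL) v} = TL := by
  ext v
  simp only [Set.mem_ofPred_eq, solT, T_mem_pathCQ_iff, F_mem_pathCQ_iff]
  exact ⟨And.left, fun hv => ⟨hv, by rintro rfl; exact hx0 hv⟩⟩

lemma edge_of_hom_pathCQ {c : ℕ → Bool} {h : ℕ → ℕ}
    (hh : ∀ a ∈ pathCQ σ m ρ {x0} TL, (minModel C c).satAt (At.map h a)) :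
    ∀ i < m, Edge C (h i) (h (i + 1)) :=
  fun i hi => ⟨ρ i, hh _ (R_mem_pathCQ hi)⟩

end Basic

section Invariant

variable {σ : Type}

structure CactusInv (p x0 : ℕ) (C : Set (At σ ℕ)) (tc : Set ℕ) : Prop where
  F_mem_iff : ∀ a, At.F a ∈ C ↔ a = x0
  T_mem : ∀ a, At.T a ∈ C → a ∈ tc
  A_mem : ∀ a, At.A a ∈ C → a ∈ tc
  x0_notMem : x0 ∉ tc
  exists_edge_into : ∀ a ∈ tc, ∃ b, Edge C b a
  exists_potential : ∃ φ : ℕ → ZMod p,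
    (∀ a b, Edge C a b → φ b = φ a + 1) ∧ ∀ a ∈ insert x0 tc, φ a = 0
  eq_of_anchored : ∀ a b c, Edge C a c → Edge C b c →
    Anchored (Edge C) (insert x0 tc) a → Anchored (Edge C) (insert x0 tc) b → a = b
  not_anchored_of_edge_x0 : ∀ a, Edge C a x0 → ¬ Anchored (Edge C) (insert x0 tc) a

variable {p x0 : ℕ} {C : Set (At σ ℕ)} {tc : Set ℕ}

namespace CactusInv

lemma occ_of_mem (hC : CactusInv p x0 C tc) {a : ℕ} (ha : a ∈ insert x0 tc) : occ C a := by
  rcases ha with rfl | ha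
  · exact DS.occ_of_mem ((hC.F_mem_iff a).2 rfl) (by simp [At.vars])
  · obtain ⟨b, hb⟩ := hC.exists_edge_into a ha
    exact hb.occ_right

lemma F_notMem (hC : CactusInv p x0 C tc) {a : ℕ} (ha : a ∈ tc) : At.F a ∉ C := fun hF =>
  hC.x0_notMem ((hC.F_mem_iff a).1 hF ▸ ha)

lemma not_transGen_x0 (hC : CactusInv p x0 C tc) {u : ℕ} (hu : u ∈ tc) :
    ¬ Relation.TransGen (Edge C) u x0 := by
  intro hux
  obtain ⟨a, hua, hax⟩ := Relation.TransGen.tail'_iff.1 hux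
  exact hC.not_anchored_of_edge_x0 a hax ((anchored_of_mem (Set.mem_insert_of_mem _ hu)).tail hua)

lemma sdiff_T (hC : CactusInv p x0 C tc) (y : ℕ) : CactusInv p x0 (C \ {At.T y}) tc := by
  obtain ⟨φ, hφ⟩ := hC.exists_potential
  refine ⟨fun a => ?_, fun a ha => hC.T_mem a ha.1, fun a ha => hC.A_mem a ha.1, hC.x0_notMem,
    ?_, ⟨φ, ?_⟩, ?_, ?_⟩
  · simpa using hC.F_mem_iff a
  all_goals simp only [edge_sdiff_T]
  · exact hC.exists_edge_into
  · exact hφ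
  · exact hC.eq_of_anchored
  · exact hC.not_anchored_of_edge_x0

end CactusInv

variable {m : ℕ} {ρ : ℕ → σ} {TL : Set ℕ}

lemma reflTransGen_pathCQ_le {a b : ℕ}
    (h : Relation.ReflTransGen (Edge (pathCQ σ m ρ {x0} TL)) a b) : a ≤ b := by
  induction h with
  | refl => rfl
  | tail _ hbc ih => have := (edge_pathCQ_iff.1 hbc).2; omega

lemma cactusInv_pathCQ (hTL_lt : ∀ t ∈ TL, x0 < t) (hTL_le : TL ⊆ Set.Iic m)
    (hTL_mod : ∀ t ∈ TL, t ≡ x0 [MOD p]) :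
    CactusInv p x0 (pathCQ σ m ρ {x0} TL) TL where
  F_mem_iff _ := F_mem_pathCQ_iff
  T_mem _ := T_mem_pathCQ_iff.1
  A_mem _ h := absurd h A_notMem_pathCQ
  x0_notMem h := lt_irrefl x0 (hTL_lt x0 h)
  exists_edge_into a ha := by
    have := hTL_lt a ha
    have : a ≤ m := hTL_le ha
    exact ⟨a - 1, edge_pathCQ_iff.2 ⟨by omega, by omega⟩⟩
  exists_potential := by
    refine ⟨fun i => (i : ZMod p) - x0, fun a b hab => ?_, fun a ha => ?_⟩
    · obtain ⟨-, rfl⟩ := edge_pathCQ_iff.1 hab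
      push_cast
      ring
    · rcases ha with rfl | ha
      · exact sub_self _
      · exact sub_eq_zero.2 ((ZMod.natCast_eq_natCast_iff _ _ _).2 (hTL_mod a ha))
  eq_of_anchored a b c hac hbc _ _ := by
    have := (edge_pathCQ_iff.1 hac).2
    have := (edge_pathCQ_iff.1 hbc).2
    omega
  not_anchored_of_edge_x0 a hax := by
    rintro ⟨w, hw, hwa⟩
    have hwx : w < x0 := by
      have := reflTransGen_pathCQ_le hwa
      have := (edge_pathCQ_iff.1 hax).2
      omega
    rcases hw with rfl | hw
    · exact lt_irrefl w hwx
    · exact lt_asymm hwx (hTL_lt w hw)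

end Invariant

section Budding

variable {σ : Type}

def budding (q : Set (At σ ℕ)) (x : ℕ) (C : Set (At σ ℕ)) (y : ℕ) (f : ℕ → ℕ) :
    Set (At σ ℕ) :=
  (C \ {At.T y}) ∪ At.map f '' (insert (At.A x) (q \ {At.F x}))

variable {m x0 : ℕ} {ρ : ℕ → σ} {TL : Set ℕ} {C : Set (At σ ℕ)} {y : ℕ} {f : ℕ → ℕ}

lemma mem_budding_pathCQ {a : At σ ℕ} :
    a ∈ budding (pathCQ σ m ρ {x0} TL) x0 C y f ↔
      (a ∈ C ∧ a ≠ At.T y) ∨ a = At.A (f x0) ∨ (∃ t ∈ TL, a = At.T (f t)) ∨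
        ∃ i < m, a = At.R (ρ i) (f i) (f (i + 1)) := by
  simp only [budding, Set.mem_union, Set.mem_sdiff, Set.mem_singleton_iff, Set.mem_image,
    Set.mem_insert_iff, mem_pathCQ]
  constructor
  · rintro (h | ⟨b, hb, rfl⟩)
    · exact Or.inl h
    · rcases hb with rfl | ⟨⟨i, hi, rfl⟩ | rfl | ⟨t, ht, rfl⟩, hne⟩
      · exact Or.inr (Or.inl rfl)
      · exact Or.inr (Or.inr (Or.inr ⟨i, hi, rfl⟩))
      · exact absurd rfl hne
      · exact Or.inr (Or.inr (Or.inl ⟨t, ht, rfl⟩))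
  · rintro (h | rfl | ⟨t, ht, rfl⟩ | ⟨i, hi, rfl⟩)
    · exact Or.inl h
    · exact Or.inr ⟨_, Or.inl rfl, rfl⟩
    · exact Or.inr ⟨At.T t, Or.inr ⟨Or.inr (Or.inr ⟨t, ht, rfl⟩), by simp⟩, rfl⟩
    · exact Or.inr ⟨_, Or.inr ⟨Or.inl ⟨i, hi, rfl⟩, by simp⟩, rfl⟩

lemma F_mem_budding_iff {a : ℕ} :
    At.F a ∈ budding (pathCQ σ m ρ {x0} TL) x0 C y f ↔ At.F a ∈ C := by
  simp [mem_budding_pathCQ]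

lemma A_mem_budding_iff {a : ℕ} :
    At.A a ∈ budding (pathCQ σ m ρ {x0} TL) x0 C y f ↔ At.A a ∈ C ∨ a = f x0 := by
  simp [mem_budding_pathCQ]

lemma T_mem_budding_iff {a : ℕ} :
    At.T a ∈ budding (pathCQ σ m ρ {x0} TL) x0 C y f ↔
      (At.T a ∈ C ∧ a ≠ y) ∨ ∃ t ∈ TL, a = f t := by
  simp [mem_budding_pathCQ]

lemma edge_budding_iff {a b : ℕ} :
    Edge (budding (pathCQ σ m ρ {x0} TL) x0 C y f) a b ↔
      Edge C a b ∨ ∃ i < m, a = f i ∧ b = f (i + 1) := by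
  constructor
  · rintro ⟨s, hs⟩
    rcases mem_budding_pathCQ.1 hs with ⟨hs, -⟩ | h | ⟨t, -, h⟩ | ⟨i, hi, h⟩
    · exact Or.inl ⟨s, hs⟩
    · cases h
    · cases h
    · cases h
      exact Or.inr ⟨i, hi, rfl, rfl⟩
  · rintro (⟨s, hs⟩ | ⟨i, hi, rfl, rfl⟩)
    · exact ⟨s, mem_budding_pathCQ.2 (Or.inl ⟨hs, by simp⟩)⟩
    · exact ⟨ρ i, mem_budding_pathCQ.2 (Or.inr (Or.inr (Or.inr ⟨i, hi, rfl⟩)))⟩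

lemma edge_budding_of_occ (hfresh : ∀ v ≠ x0, ¬ occ C (f v)) {a b : ℕ}
    (hab : Edge (budding (pathCQ σ m ρ {x0} TL) x0 C y f) a b) (hb : occ C b) :
    Edge C a b ∨ ∃ i, i + 1 = x0 ∧ a = f i := by
  rcases edge_budding_iff.1 hab with hab | ⟨i, -, rfl, rfl⟩
  · exact Or.inl hab
  · exact Or.inr ⟨i, by_contra fun hne => hfresh _ hne hb, rfl⟩

lemma edge_budding_into_fresh (hinj : Function.Injective f)
    (hfresh : ∀ v ≠ x0, ¬ occ C (f v)) {a j : ℕ}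
    (haj : Edge (budding (pathCQ σ m ρ {x0} TL) x0 C y f) a (f j)) (hj : j ≠ x0) :
    ∃ i, i + 1 = j ∧ a = f i := by
  rcases edge_budding_iff.1 haj with haj | ⟨i, -, rfl, hij⟩
  · exact absurd haj.occ_right (hfresh j hj)
  · exact ⟨i, (hinj hij).symm, rfl⟩

lemma eq_of_reflTransGen_budding_prefix (hinj : Function.Injective f)
    (hfresh : ∀ v ≠ x0, ¬ occ C (f v)) {a j : ℕ}
    (h : Relation.ReflTransGen (Edge (budding (pathCQ σ m ρ {x0} TL) x0 C y f)) a (f j))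
    (hj : j < x0) : ∃ i ≤ j, a = f i := by
  generalize hb : f j = b at h
  induction h generalizing j with
  | refl => exact ⟨j, le_rfl, hb.symm⟩
  | tail _ hcb ih =>
    subst hb
    obtain ⟨i, rfl, rfl⟩ := edge_budding_into_fresh hinj hfresh hcb hj.ne
    obtain ⟨k, hk, rfl⟩ := ih (by omega) rfl
    exact ⟨k, by omega, rfl⟩

lemma reflTransGen_budding_of_occ (hinj : Function.Injective f)
    (hfresh : ∀ v ≠ x0, ¬ occ C (f v)) {a z : ℕ}
    (h : Relation.ReflTransGen (Edge (budding (pathCQ σ m ρ {x0} TL) x0 C y f)) a z)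
    (hz : occ C z) :
    Relation.ReflTransGen (Edge C) a z ∨ ∃ j < x0, a = f j := by
  induction h using Relation.ReflTransGen.head_induction_on with
  | refl => exact Or.inl .refl
  | head hab _ ih =>
    rcases ih with hbz | ⟨j, hj, rfl⟩
    · rcases edge_budding_of_occ hfresh hab (occ_of_reflTransGen hbz hz) with hab | ⟨i, hi, rfl⟩
      · exact Or.inl (hbz.head hab)
      · exact Or.inr ⟨i, by omega, rfl⟩
    · obtain ⟨i, rfl, rfl⟩ := edge_budding_into_fresh hinj hfresh hab hj.ne
      exact Or.inr ⟨i, by omega, rfl⟩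

variable {p : ℕ} {tc : Set ℕ}

lemma not_anchored_budding_prefix (hC : CactusInv p x0 C tc) (hTL_lt : ∀ t ∈ TL, x0 < t)
    (hinj : Function.Injective f) (hfresh : ∀ v ≠ x0, ¬ occ C (f v)) {j : ℕ} (hj : j < x0) :
    ¬ Anchored (Edge (budding (pathCQ σ m ρ {x0} TL) x0 C y f)) (insert x0 (tc ∪ f '' TL))
      (f j) := by
  rintro ⟨a, ha, haj⟩
  obtain ⟨i, hij, rfl⟩ := eq_of_reflTransGen_budding_prefix hinj hfresh haj hj
  have hi : i ≠ x0 := by omega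
  rcases ha with ha | ha | ⟨t, ht, hti⟩
  · exact hfresh i hi (ha ▸ hC.occ_of_mem (Set.mem_insert x0 tc))
  · exact hfresh i hi (hC.occ_of_mem (Set.mem_insert_of_mem _ ha))
  · have := hTL_lt t ht
    have := hinj hti
    omega

lemma anchored_of_anchored_budding (hC : CactusInv p x0 C tc) (hTL_lt : ∀ t ∈ TL, x0 < t)
    (hinj : Function.Injective f) (hfresh : ∀ v ≠ x0, ¬ occ C (f v)) {z : ℕ} (hz : occ C z)
    (h : Anchored (Edge (budding (pathCQ σ m ρ {x0} TL) x0 C y f)) (insert x0 (tc ∪ f '' TL)) z) :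
    Anchored (Edge C) (insert x0 tc) z := by
  obtain ⟨a, ha, haz⟩ := h
  rcases reflTransGen_budding_of_occ hinj hfresh haz hz with haz | ⟨j, hj, rfl⟩
  · refine ⟨a, ?_, haz⟩
    rcases ha with rfl | ha | ⟨t, ht, rfl⟩
    · exact Set.mem_insert _ _
    · exact Set.mem_insert_of_mem _ ha
    · exact absurd (occ_of_reflTransGen haz hz) (hfresh t (hTL_lt t ht).ne')
  · exact (not_anchored_budding_prefix (m := m) (ρ := ρ) (y := y) hC hTL_lt hinj hfresh hj
      (anchored_of_mem ha)).elim

lemma exists_potential_budding (hC : CactusInv p x0 C tc) (hTL_mod : ∀ t ∈ TL, t ≡ x0 [MOD p])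
    (hyT : At.T y ∈ C) (hinj : Function.Injective f) (hfx : f x0 = y)
    (hfresh : ∀ v ≠ x0, ¬ occ C (f v)) :
    ∃ φ : ℕ → ZMod p,
      (∀ a b, Edge (budding (pathCQ σ m ρ {x0} TL) x0 C y f) a b → φ b = φ a + 1) ∧
        ∀ a ∈ insert x0 (tc ∪ f '' TL), φ a = 0 := by
  obtain ⟨φ, hφE, hφ0⟩ := hC.exists_potential
  set ψ : ℕ → ZMod p := fun w => if occ C w then φ w else ((Function.invFun f w : ℕ) : ZMod p) - x0
  have hold : ∀ w, occ C w → ψ w = φ w := fun w hw => if_pos hw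
  have hnew : ∀ i, ψ (f i) = i - x0 := by
    intro i
    by_cases hi : i = x0
    · subst hi
      rw [hold _ (hfx ▸ occ_of_mem hyT (by simp [At.vars])), hfx,
        hφ0 y (Set.mem_insert_of_mem _ (hC.T_mem y hyT)), sub_self]
    · simp [ψ, hfresh i hi, Function.leftInverse_invFun hinj i]
  refine ⟨ψ, fun a b hab => ?_, fun a ha => ?_⟩
  · rcases edge_budding_iff.1 hab with hab | ⟨i, -, rfl, rfl⟩
    · rw [hold a hab.occ_left, hold b hab.occ_right, hφE a b hab]
    · rw [hnew, hnew]
      push_cast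
      ring
  · rcases ha with rfl | ha | ⟨t, ht, rfl⟩
    · rw [hold _ (hC.occ_of_mem (Set.mem_insert _ _)), hφ0 _ (Set.mem_insert _ _)]
    · rw [hold _ (hC.occ_of_mem (Set.mem_insert_of_mem _ ha)),
        hφ0 _ (Set.mem_insert_of_mem _ ha)]
    · rw [hnew, sub_eq_zero]
      exact (ZMod.natCast_eq_natCast_iff _ _ _).2 (hTL_mod t ht)

lemma CactusInv.budding (hC : CactusInv p x0 C tc) (hTL_lt : ∀ t ∈ TL, x0 < t)
    (hTL_le : TL ⊆ Set.Iic m) (hTL_mod : ∀ t ∈ TL, t ≡ x0 [MOD p]) (hyT : At.T y ∈ C)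
    (hinj : Function.Injective f) (hfx : f x0 = y) (hfresh : ∀ v ≠ x0, ¬ occ C (f v)) :
    CactusInv p x0 (budding (pathCQ σ m ρ {x0} TL) x0 C y f) (tc ∪ f '' TL) where
  F_mem_iff a := F_mem_budding_iff.trans (hC.F_mem_iff a)
  T_mem a ha := by
    rcases T_mem_budding_iff.1 ha with ⟨ha, -⟩ | ⟨t, ht, rfl⟩
    · exact Or.inl (hC.T_mem a ha)
    · exact Or.inr ⟨t, ht, rfl⟩
  A_mem a ha := by
    rcases A_mem_budding_iff.1 ha with ha | rfl
    · exact Or.inl (hC.A_mem a ha)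
    · exact Or.inl (hfx ▸ hC.T_mem y hyT)
  x0_notMem := by
    rintro (h | ⟨t, ht, hx⟩)
    · exact hC.x0_notMem h
    · exact hfresh t (hTL_lt t ht).ne' (hx ▸ hC.occ_of_mem (Set.mem_insert _ _))
  exists_edge_into a ha := by
    rcases ha with ha | ⟨t, ht, rfl⟩
    · obtain ⟨b, hb⟩ := hC.exists_edge_into a ha
      exact ⟨b, edge_budding_iff.2 (Or.inl hb)⟩
    · have := hTL_lt t ht
      have : t ≤ m := hTL_le ht
      refine ⟨f (t - 1), edge_budding_iff.2 (Or.inr ⟨t - 1, by omega, rfl, ?_⟩)⟩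
      rw [Nat.sub_add_cancel (by omega)]
  exists_potential := exists_potential_budding hC hTL_mod hyT hinj hfx hfresh
  eq_of_anchored a b c hac hbc ha hb := by
    by_cases hc : occ C c
    · have old : ∀ {a}, Edge (DS.budding (pathCQ σ m ρ {x0} TL) x0 C y f) a c →
          Anchored (Edge (DS.budding (pathCQ σ m ρ {x0} TL) x0 C y f)) (insert x0 (tc ∪ f '' TL))
            a →
          Edge C a c ∧ Anchored (Edge C) (insert x0 tc) a := by
        intro a hac ha
        rcases edge_budding_of_occ hfresh hac hc with hac | ⟨i, hi, rfl⟩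
        · exact ⟨hac, anchored_of_anchored_budding hC hTL_lt hinj hfresh hac.occ_left ha⟩
        · exact absurd ha (not_anchored_budding_prefix hC hTL_lt hinj hfresh (by omega))
      obtain ⟨hac, ha⟩ := old hac ha
      obtain ⟨hbc, hb⟩ := old hbc hb
      exact hC.eq_of_anchored a b c hac hbc ha hb
    · rcases edge_budding_iff.1 hac with hac | ⟨i, -, rfl, rfl⟩
      · exact absurd hac.occ_right hc
      rcases edge_budding_iff.1 hbc with hbc | ⟨j, -, rfl, hij⟩
      · exact absurd hbc.occ_right hc
      rw [Nat.succ_injective (hinj hij)]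
  not_anchored_of_edge_x0 a hax ha := by
    have hx0 : occ C x0 := hC.occ_of_mem (Set.mem_insert _ _)
    rcases edge_budding_of_occ hfresh hax hx0 with hax | ⟨i, hi, rfl⟩
    · exact hC.not_anchored_of_edge_x0 a hax
        (anchored_of_anchored_budding hC hTL_lt hinj hfresh hax.occ_left ha)
    · exact not_anchored_budding_prefix hC hTL_lt hinj hfresh (by omega) ha

end Budding

section Cactus

variable {σ : Type} {m x0 p : ℕ} {ρ : ℕ → σ} {TL : Set ℕ} {C : Set (At σ ℕ)} {y : ℕ}
  {f : ℕ → ℕ}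

lemma undecided_budding (hx0 : x0 ∉ TL) (hfresh : ∀ v ≠ x0, ¬ occ C (f v)) {d : ℕ}
    (hd : undecided C d) : undecided (budding (pathCQ σ m ρ {x0} TL) x0 C y f) d := by
  obtain ⟨hA, hF, hT⟩ := hd
  refine ⟨A_mem_budding_iff.2 (Or.inl hA), fun h => hF (F_mem_budding_iff.1 h), fun h => ?_⟩
  rcases T_mem_budding_iff.1 h with ⟨h, -⟩ | ⟨t, ht, rfl⟩
  · exact hT h
  · exact hfresh t (fun htx => hx0 (htx ▸ ht)) (occ_of_mem hA (by simp [At.vars]))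

lemma undecided_budding_self (hx0 : x0 ∉ TL) (hinj : Function.Injective f) (hfx : f x0 = y)
    (hyF : At.F y ∉ C) : undecided (budding (pathCQ σ m ρ {x0} TL) x0 C y f) y := by
  refine ⟨A_mem_budding_iff.2 (Or.inr hfx.symm), fun h => hyF (F_mem_budding_iff.1 h), fun h => ?_⟩
  rcases T_mem_budding_iff.1 h with ⟨-, hne⟩ | ⟨t, ht, hty⟩
  · exact hne rfl
  · exact hx0 (hinj (hty.symm.trans hfx.symm) ▸ ht)

lemma covACert_budding (hx0 : x0 ∉ TL) (hyF : At.F y ∉ C)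
    (hinj : Function.Injective f) (hfx : f x0 = y) (hfresh : ∀ v ≠ x0, ¬ occ C (f v))
    (hent : covACert C (pathCQ σ m ρ {x0} TL)) :
    covACert (budding (pathCQ σ m ρ {x0} TL) x0 C y f) (pathCQ σ m ρ {x0} TL) := by
  intro c
  have hy := undecided_budding_self (m := m) (ρ := ρ) hx0 hinj hfx hyF
  cases hcy : c y
  · obtain ⟨h, hh⟩ := hent c
    refine ⟨h, fun a ha => ?_⟩
    have hsat := hh a ha
    rcases mem_pathCQ.1 ha with ⟨i, -, rfl⟩ | rfl | ⟨t, -, rfl⟩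
    · exact mem_budding_pathCQ.2 (Or.inl ⟨hsat, by simp⟩)
    · rcases hsat with hF | ⟨hd, hc⟩
      · exact Or.inl (F_mem_budding_iff.2 hF)
      · exact Or.inr ⟨undecided_budding hx0 hfresh hd, hc⟩
    · rcases hsat with hT | ⟨hd, hc⟩
      · by_cases hty : h t = y
        · exact Or.inr ⟨hty ▸ hy, hty ▸ hcy⟩
        · exact Or.inl (T_mem_budding_iff.2 (Or.inl ⟨hT, hty⟩))
      · exact Or.inr ⟨undecided_budding hx0 hfresh hd, hc⟩
  · refine ⟨f, fun a ha => ?_⟩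
    rcases mem_pathCQ.1 ha with ⟨i, hi, rfl⟩ | rfl | ⟨t, ht, rfl⟩
    · exact mem_budding_pathCQ.2 (Or.inr (Or.inr (Or.inr ⟨i, hi, rfl⟩)))
    · exact Or.inr ⟨hfx ▸ hy, hfx ▸ hcy⟩
    · exact Or.inl (T_mem_budding_iff.2 (Or.inr ⟨t, ht, rfl⟩))

variable {S : Set (List ℕ)} {seg : ℕ → List ℕ} {tc : Set ℕ}

lemma covACert_of_cacP (hx0 : x0 ∉ TL) (h : CacP (pathCQ σ m ρ {x0} TL) x0 C S seg tc) :
    covACert C (pathCQ σ m ρ {x0} TL) := by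
  induction h with
  | base => exact fun c => ⟨id, fun a ha => by simpa [At.map_id] using satAt_minModel_of_mem ha c⟩
  | bud C S seg tc _ y _ hyF f hinj hfx hfresh ih =>
    exact covACert_budding hx0 hyF hinj hfx hfresh ih
  | prune C S seg tc _ y _ _ hent _ => exact hent

lemma cactusInv_of_cacP (hTL_lt : ∀ t ∈ TL, x0 < t) (hTL_le : TL ⊆ Set.Iic m)
    (hTL_mod : ∀ t ∈ TL, t ≡ x0 [MOD p]) (h : CacP (pathCQ σ m ρ {x0} TL) x0 C S seg tc) :
    CactusInv p x0 C tc := by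
  have hx0 : x0 ∉ TL := fun hx => lt_irrefl x0 (hTL_lt x0 hx)
  induction h with
  | base =>
    rw [setOf_solT_pathCQ hx0]
    exact cactusInv_pathCQ hTL_lt hTL_le hTL_mod
  | bud C S seg tc _ y hyT _ f hinj hfx hfresh ih =>
    rw [setOf_solT_pathCQ hx0]
    exact ih.budding hTL_lt hTL_le hTL_mod hyT hinj hfx hfresh
  | prune C S seg tc _ y _ _ _ ih => exact ih.sdiff_T y

end Cactus

section Pruning

variable {σ : Type} {m x0 p : ℕ} {ρ : ℕ → σ} {TL : Set ℕ} {C : Set (At σ ℕ)} {tc : Set ℕ}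
  {u : ℕ}

lemma not_transGen_hom_T_node (hC : CactusInv p x0 C tc) (hTL_lt : ∀ t ∈ TL, x0 < t)
    (hTL_le : TL ⊆ Set.Iic m)
    (hTL_ap : ∀ l t, x0 < l → l < t → t ∈ TL → l ≡ x0 [MOD p] → l ∈ TL)
    (hu : u ∈ tc) (hTu : At.T u ∉ C) (hAu : At.A u ∉ C) {c : ℕ → Bool} {h : ℕ → ℕ}
    (hh : ∀ a ∈ pathCQ σ m ρ {x0} TL, (minModel C c).satAt (At.map h a))
    (hx : ¬ Relation.TransGen (Edge C) u (h x0)) {t : ℕ} (ht : t ∈ TL) :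
    ¬ Relation.TransGen (Edge C) u (h t) := by
  intro hut
  have hwalk := edge_of_hom_pathCQ hh
  have hx_anchor : h x0 ∈ insert x0 tc := by
    rcases hh _ (F_mem_pathCQ_iff.2 rfl) with hF | ⟨⟨hA, -⟩, -⟩
    · exact Or.inl ((hC.F_mem_iff _).1 hF)
    · exact Or.inr (hC.A_mem _ hA)
  have htm : t ≤ m := hTL_le ht
  obtain ⟨l, hxl, hlt, hul, hul'⟩ :=
    Nat.exists_not_and_succ_of_le (P := fun i => Relation.TransGen (Edge C) u (h i))
      (hTL_lt t ht).le hx hut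
  have hlu : h l = u :=
    eq_of_edge_into_descendants hC.eq_of_anchored (Set.mem_insert_of_mem _ hu)
      ((anchored_of_mem hx_anchor).tail (reflTransGen_of_chain hwalk hxl (by omega)))
      (hwalk l (by omega)) hul' hul
  have hl_mod : l ≡ x0 [MOD p] := by
    obtain ⟨φ, hφE, hφ0⟩ := hC.exists_potential
    have := potential_add_of_chain hφE hwalk hxl (by omega)
    rw [hlu, hφ0 u (Set.mem_insert_of_mem _ hu), hφ0 _ hx_anchor, zero_add, zero_add] at this
    exact (ZMod.natCast_eq_natCast_iff _ _ _).1 this.symm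
  have hl_node : At.F l ∈ pathCQ σ m ρ {x0} TL ∨ At.T l ∈ pathCQ σ m ρ {x0} TL := by
    rcases hxl.eq_or_lt with rfl | hxl
    · exact Or.inl (F_mem_pathCQ_iff.2 rfl)
    · exact Or.inr (T_mem_pathCQ_iff.2 (hTL_ap l t hxl hlt ht hl_mod))
  rcases labelled_of_minModel (d := h l) (hl_node.imp (hh _) (hh _)) with hF | hT | hA
  · exact hC.F_notMem hu (hlu ▸ hF)
  · exact hTu (hlu ▸ hT)
  · exact hAu (hlu ▸ hA)

lemma covACert_sdiff_T_of_transGen (hC : CactusInv p x0 C tc) (hTL_lt : ∀ t ∈ TL, x0 < t)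
    (hTL_le : TL ⊆ Set.Iic m)
    (hTL_ap : ∀ l t, x0 < l → l < t → t ∈ TL → l ≡ x0 [MOD p] → l ∈ TL)
    (hent : covACert C (pathCQ σ m ρ {x0} TL))
    (hu : u ∈ tc) (hTu : At.T u ∉ C) (hAu : At.A u ∉ C) {v : ℕ}
    (huv : Relation.TransGen (Edge C) u v) :
    covACert (C \ {At.T v}) (pathCQ σ m ρ {x0} TL) := by
  intro c
  set c' : ℕ → Bool := fun w => if Relation.TransGen (Edge C) u w then false else c w
  obtain ⟨h, hh⟩ := hent c'
  have transfer : ∀ w, ¬ Relation.TransGen (Edge C) u w →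
      ((minModel (C \ {At.T v}) c).FS w ↔ (minModel C c').FS w) ∧
        ((minModel (C \ {At.T v}) c).TS w ↔ (minModel C c').TS w) := fun w hw =>
    minModel_sdiff_T (fun hwv => hw (hwv ▸ huv)) (if_neg hw).symm
  have hFx : (minModel C c').FS (h x0) := hh _ (F_mem_pathCQ_iff.2 rfl)
  have hx : ¬ Relation.TransGen (Edge C) u (h x0) := by
    rcases hFx with hF | ⟨-, hc⟩
    · rw [(hC.F_mem_iff _).1 hF]
      exact hC.not_transGen_x0 hu
    · intro hux
      simp [c', hux] at hc
  refine ⟨h, fun a ha => ?_⟩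
  rcases mem_pathCQ.1 ha with ⟨i, -, rfl⟩ | rfl | ⟨t, ht, rfl⟩
  · exact ⟨hh _ ha, by simp⟩
  · exact (transfer _ hx).1.2 hFx
  · exact (transfer _ (not_transGen_hom_T_node hC hTL_lt hTL_le hTL_ap hu hTu hAu hh hx ht)).2.2
      (hh _ ha)

end Pruning

lemma rightPeriodic.exists_period {σ : Type} {m x0 : ℕ} {ρ : ℕ → σ} {TL : Set ℕ}
    (hper : rightPeriodic σ m x0 ρ TL) (hr : 2 ≤ TL.ncard) :
    ∃ p, (∀ t ∈ TL, t ≡ x0 [MOD p]) ∧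
      ∀ l t, x0 < l → l < t → t ∈ TL → l ≡ x0 [MOD p] → l ∈ TL := by
  rcases hper.2 with hr1 | ⟨p, -, hTL, -⟩
  · omega
  refine ⟨p, fun t ht => ?_, fun l t hxl hlt ht hl => ?_⟩
  · obtain ⟨k, -, -, rfl⟩ := (Set.ext_iff.1 hTL t).1 ht
    simp [Nat.ModEq]
  · obtain ⟨kt, -, hkt, rfl⟩ := (Set.ext_iff.1 hTL t).1 ht
    obtain ⟨k, hk⟩ := (Nat.modEq_iff_dvd' hxl.le).1 hl.symm
    refine (Set.ext_iff.1 hTL l).2 ⟨k, Nat.pos_of_ne_zero ?_, ?_, by rw [mul_comm, ← hk]; omega⟩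
    · rintro rfl
      omega
    · have : p * k < p * kt := by rw [← hk, mul_comm]; omega
      exact (Nat.lt_of_mul_lt_mul_left this).le.trans hkt

theorem statement_11_general {σ : Type} (m x0 : ℕ) (ρ : ℕ → σ) (TL : Set ℕ)
    (hTL : TL ⊆ Set.Iic m)
    (hr2 : 2 ≤ TL.ncard)
    (hper : rightPeriodic σ m x0 ρ TL)
    (C : Set (At σ ℕ)) (S : Set (List ℕ)) (seg : ℕ → List ℕ) (tc : Set ℕ)
    (hC : CacP (pathCQ σ m ρ {x0} TL) x0 C S seg tc)
    (hmin : ∀ (C' : Set (At σ ℕ)) S' seg' tc',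
      CacP (pathCQ σ m ρ {x0} TL) x0 C' S' seg' tc' →
      ∀ g : ℕ → ℕ, Function.Injective g → At.map g '' C' ⊆ C → At.map g '' C' = C) :
    ∀ u ∈ tc, At.T u ∉ C → At.A u ∉ C →
      ∀ v ∈ tc, Relation.TransGen (fun a b => ∃ r, At.R r a b ∈ C) u v →
        At.T v ∉ C := by
  intro u hu hTu hAu v hv huv hTv
  obtain ⟨p, hTL_mod, hTL_ap⟩ := hper.exists_period hr2
  have hInv : CactusInv p x0 C tc := cactusInv_of_cacP hper.1 hTL hTL_mod hC
  have hx0 : x0 ∉ TL := fun hx => lt_irrefl x0 (hper.1 x0 hx)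
  have hpruned := CacP.prune C S seg tc hC v hTv (hInv.F_notMem hv)
    (covACert_sdiff_T_of_transGen hInv hper.1 hTL hTL_ap (covACert_of_cacP hx0 hC) hu hTu hAu huv)
  have hEq := hmin _ S seg tc hpruned id Function.injective_id (by simp [At.map_id])
  rw [At.map_id, Set.image_id] at hEq
  exact (hEq ▸ Set.notMem_sdiff_of_mem rfl : At.T v ∉ C) hTv

/-- Let `q = q_{0r}` be a right-periodic twinless path `1`-CQ
with `r ≥ 2` and `Q = (cov_A, q)`, and let `C ∈ K_Q^min` with set of `T`-copies
`tc`.  If a `T`-copy `u` is unlabelled in `C` (neither `T` nor `A`), then there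
is no `T`-copy `v` labelled by `T` reachable from `u` by a directed path in `C`. -/
theorem statement_11 {σ : Type} (m x0 : ℕ) (ρ : ℕ → σ) (TL : Set ℕ)
    (hm : 0 < m) (hx0 : x0 ≤ m) (hTL : TL ⊆ Set.Iic m)
    (hr2 : 2 ≤ TL.ncard) (hx0TL : x0 ∉ TL)
    (hper : rightPeriodic σ m x0 ρ TL)
    (C : Set (At σ ℕ)) (S : Set (List ℕ)) (seg : ℕ → List ℕ) (tc : Set ℕ)
    (hC : CacP (pathCQ σ m ρ {x0} TL) x0 C S seg tc)
    (hmin : ∀ (C' : Set (At σ ℕ)) S' seg' tc',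
      CacP (pathCQ σ m ρ {x0} TL) x0 C' S' seg' tc' →
      ∀ g : ℕ → ℕ, Function.Injective g → At.map g '' C' ⊆ C → At.map g '' C' = C) :
    ∀ u ∈ tc, At.T u ∉ C → At.A u ∉ C →
      ∀ v ∈ tc, Relation.TransGen (fun a b => ∃ r, At.R r a b ∈ C) u v →
        At.T v ∉ C :=
  statement_11_general m x0 ρ TL hTL hr2 hper C S seg tc hC hmin

end DS
end

section
/- Let q be a twinless path 2-CQ in which the first T-node t_1 precedes the first F-node f_1, let ψ be a 3CNF with n_ψ clauses, let n ≥ (n_ψ + 2)(2|q| + 1), and let A_{q,ψ} be any (ψ, n)-gadget for q. If cov_A, A_{q,ψ} ⊭ q, then ψ is satisfiable. -/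
/-!
Fix a minimal model, i.e. a colouring `col` of the undecided individuals (`true` for `F`,
`false` for `T`), in which `q` has no match. The wheel contacts are undecided. In a cogwheel,
the copy of `q` glued between contacts `j` and `j + 1` matches as soon as contact `j` is `T` and
contact `j + 1` is `F`; going round the cycle, every wheel is monochromatic. The copy `q_F`
matches if both wheels of a bike are `F`, and `q_T` if both are `T`, so the two wheels of each
bike have opposite colours; make `p` true iff `W_•` is `T`. Finally, the clause copy `q^c`
matches if each of its three connections carries the colour of its label in `q`; so some
connection does not, and by rules (p1)/(p2) its literal is true.
-/

attribute [local instance] Classical.propDecidable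

namespace DS

/-- Gluing normalisation for the nodes of an `n`-cogwheel: the chosen `T`-node
of copy `j` is glued to (identified with) the chosen `F`-node of copy `j - 1`. -/
def wheelNorm (n : ℕ) (cT cF : ZMod n → ℕ) (p : ZMod n × ℕ) : ZMod n × ℕ :=
  if p.2 = cT p.1 then (p.1 - 1, cF (p.1 - 1)) else p

/-- The copy of `q` used in a cogwheel: the labels `T`/`F` of the two chosen
contact nodes are replaced by `A`. -/
def contactCopy {σ : Type} (q : Set (At σ ℕ)) (tpos fpos : ℕ) : Set (At σ ℕ) :=
  insert (At.A tpos) (insert (At.A fpos) (q \ {At.T tpos, At.F fpos}))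

/-- The `n`-cogwheel for the path CQ `q` with contact choices `cT j ∈ TL`,
`cF j ∈ FL` (in the `j`-th copy of `q`): the `n` copies are arranged in a cycle,
gluing the `F`-contact of copy `j` to the `T`-contact of copy `j + 1`. -/
def cogwheel (σ : Type) (n : ℕ) (q : Set (At σ ℕ)) (cT cF : ZMod n → ℕ) :
    Set (At σ (ZMod n × ℕ)) :=
  {a | ∃ j : ZMod n, ∃ b ∈ contactCopy q (cT j) (cF j),
        a = At.map (fun v => wheelNorm n cT cF (j, v)) b}

/-- The contact-distance between the contacts with indices `a` and `b`. -/
def cdist {n : ℕ} (a b : ZMod n) : ℕ := min (ZMod.val (a - b)) (ZMod.val (b - a))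
abbrev BInd (n : ℕ) : Type := (Bool × ZMod n × ℕ) ⊕ (Bool × ℕ)

/-- Gluing normalisation inside the wheel `w` of a bike. -/
def bwNorm (n : ℕ) (cT cF : Bool → ZMod n → ℕ) (w : Bool) (j : ZMod n) (v : ℕ) :
    Bool × ZMod n × ℕ :=
  if v = cT w j then (w, j - 1, cF w (j - 1)) else (w, j, v)

/-- The renaming of the copy `q_F`: its node `ff1` (= `c_F^•`) is glued to the
contact with index `iB •` of `W_•`, its node `ff2` (= `c_F^∘`) to the contact
with index `iB ∘` of `W_∘`; other nodes are fresh. -/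
def embF (n : ℕ) (cF : Bool → ZMod n → ℕ) (iB : Bool → ZMod n)
    (ff1 ff2 : ℕ) (v : ℕ) : BInd n :=
  if v = ff1 then Sum.inl (true, iB true, cF true (iB true))
  else if v = ff2 then Sum.inl (false, iB false, cF false (iB false))
  else Sum.inr (false, v)

/-- The renaming of the copy `q_T`: its node `tt1` (= `c_T^•`) is glued to the
contact with index `jB •` of `W_•`, its node `tt2` (= `c_T^∘`) to the contact
with index `jB ∘` of `W_∘`; other nodes are fresh. -/
def embT (n : ℕ) (cF : Bool → ZMod n → ℕ) (jB : Bool → ZMod n)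
    (tt1 tt2 : ℕ) (v : ℕ) : BInd n :=
  if v = tt1 then Sum.inl (true, jB true, cF true (jB true))
  else if v = tt2 then Sum.inl (false, jB false, cF false (jB false))
  else Sum.inr (true, v)

/-- The `n`-bike for `q` built from the two `n`-cogwheels with contact choices
`cT w`, `cF w` and the copies `q_F` (with the `F`-labels of `ff1 ≺ ff2` replaced
by `A`, glued to the contacts `iB w`) and `q_T` (with the `T`-labels of
`tt1 ≺ tt2` replaced by `A`, glued to the contacts `jB w`). -/
def bike (σ : Type) (n : ℕ) (q : Set (At σ ℕ)) (cT cF : Bool → ZMod n → ℕ)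
    (iB jB : Bool → ZMod n) (ff1 ff2 tt1 tt2 : ℕ) : Set (At σ (BInd n)) :=
  {a | ∃ w j, ∃ b ∈ contactCopy q (cT w j) (cF w j),
        a = At.map (fun v => Sum.inl (bwNorm n cT cF w j v)) b} ∪
  (At.map (embF n cF iB ff1 ff2) ''
    (insert (At.A ff1) (insert (At.A ff2) (q \ {At.F ff1, At.F ff2})))) ∪
  (At.map (embT n cF jB tt1 tt2) ''
    (insert (At.A tt1) (insert (At.A tt2) (q \ {At.T tt1, At.T tt2}))))

/-- Rules (p1)/(p2): the wheel (of the bike of the variable of the literal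
`ℓ^c_z`) to which the `c`-connection `ℓ_z` is glued: `W_•` (value `true`) iff
either the literal is positive and `ℓ_z` is an `F`-node, or the literal is
negative and `ℓ_z` is a `T`-node; `W_∘` (value `false`) otherwise. -/
noncomputable def wSel (FL TL : Set ℕ) {V0 K : ℕ} (ψ : Fin K → Fin 3 → Bool × Fin V0)
    (l : Fin 3 → ℕ) (c : Fin K) (z : Fin 3) : Bool :=
  if ((ψ c z).1 = true ∧ l z ∈ FL) ∨ ((ψ c z).1 = false ∧ l z ∈ TL) then true else false

/-- The wheel contact to which the `c`-connection `ℓ_z` is glued. -/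
noncomputable def cTgt (n : ℕ) {V0 K : ℕ} (ψ : Fin K → Fin 3 → Bool × Fin V0)
    (cF : Fin V0 → Bool → ZMod n → ℕ) (FL TL : Set ℕ) (l : Fin 3 → ℕ)
    (gi : Fin K → Fin 3 → ZMod n) (c : Fin K) (z : Fin 3) :
    (Fin V0 × BInd n) ⊕ (Fin K × ℕ) :=
  Sum.inl ((ψ c z).2, Sum.inl (wSel FL TL ψ l c z, gi c z,
    cF (ψ c z).2 (wSel FL TL ψ l c z) (gi c z)))

/-- The renaming of the fresh copy `q^c` of `q` for the clause `c`: the three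
special-triple nodes are glued to wheel contacts, the others are fresh. -/
noncomputable def embC (n : ℕ) {V0 K : ℕ} (ψ : Fin K → Fin 3 → Bool × Fin V0)
    (cF : Fin V0 → Bool → ZMod n → ℕ) (FL TL : Set ℕ) (l : Fin 3 → ℕ)
    (gi : Fin K → Fin 3 → ZMod n) (c : Fin K) (v : ℕ) :
    (Fin V0 × BInd n) ⊕ (Fin K × ℕ) :=
  if v = l 0 then cTgt n ψ cF FL TL l gi c 0
  else if v = l 1 then cTgt n ψ cF FL TL l gi c 1
  else if v = l 2 then cTgt n ψ cF FL TL l gi c 2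
  else Sum.inr (c, v)

/-- The copy of `q` used for a clause: the `F`/`T`-labels of the special triple
are replaced by `A`. -/
def clauseCopy {σ : Type} (q : Set (At σ ℕ)) (l : Fin 3 → ℕ) : Set (At σ ℕ) :=
  insert (At.A (l 0)) (insert (At.A (l 1)) (insert (At.A (l 2))
    (q \ {At.F (l 0), At.T (l 0), At.F (l 1), At.T (l 1), At.F (l 2), At.T (l 2)})))

/-- The `(ψ, n)`-gadget `A_{q,ψ}`: a fresh `n`-bike for each propositional
variable of `ψ`, plus, for each clause `c`, a fresh copy of `q` whose
special-triple nodes are glued to wheel contacts according to (p1)/(p2). -/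
noncomputable def gadget (σ : Type) (n m : ℕ) (ρ : ℕ → σ) (FL TL : Set ℕ)
    {V0 K : ℕ} (ψ : Fin K → Fin 3 → Bool × Fin V0)
    (cT cF : Fin V0 → Bool → ZMod n → ℕ) (iB jB : Fin V0 → Bool → ZMod n)
    (fB tB : Fin V0 → Bool → ℕ) (l : Fin 3 → ℕ) (gi : Fin K → Fin 3 → ZMod n) :
    Set (At σ ((Fin V0 × BInd n) ⊕ (Fin K × ℕ))) :=
  {a | ∃ p : Fin V0, ∃ b ∈ bike σ n (pathCQ σ m ρ FL TL) (cT p) (cF p) (iB p) (jB p)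
        (fB p true) (fB p false) (tB p true) (tB p false),
        a = At.map (fun u => (Sum.inl (p, u) : (Fin V0 × BInd n) ⊕ (Fin K × ℕ))) b} ∪
  {a | ∃ c : Fin K, ∃ b ∈ clauseCopy (pathCQ σ m ρ FL TL) l,
        a = At.map (embC n ψ cF FL TL l gi c) b}


namespace At

variable {σ α β : Type} {e : α → β} {b : At σ α} {x : β}

theorem map_eq_F_iff : b.map e = .F x ↔ ∃ v, b = .F v ∧ e v = x := by
  cases b <;> simp [map]

theorem map_eq_T_iff : b.map e = .T x ↔ ∃ v, b = .T v ∧ e v = x := by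
  cases b <;> simp [map]

@[simp]
theorem map_map {γ : Type} (f : β → γ) : (b.map e).map f = b.map (f ∘ e) := by
  cases b <;> rfl

end At

section MinModel

variable {σ α V : Type} {G : Set (At σ α)} {col : α → Bool}

theorem minModel_satAt_of_mem {a : At σ α} (ha : a ∈ G) : (minModel G col).satAt a := by
  cases a
  exacts [Or.inl ha, Or.inl ha, ha, ha]

theorem minModel_satAt_F {x : α} (hx : undecided G x) (hc : col x = true) :
    (minModel G col).satAt (.F x) :=
  Or.inr ⟨hx, hc⟩

theorem minModel_satAt_T {x : α} (hx : undecided G x) (hc : col x = false) :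
    (minModel G col).satAt (.T x) :=
  Or.inr ⟨hx, hc⟩

theorem satCQ_minModel_of_copy {q : Set (At σ V)} (S : Set (At σ V)) (e : V → α)
    (hS : ∀ b ∈ S, b.map e ∈ G)
    (hq : ∀ a ∈ q, a ∉ S → (minModel G col).satAt (a.map e)) : (minModel G col).satCQ q :=
  ⟨e, fun a ha => if h : a ∈ S then minModel_satAt_of_mem (hS a h) else hq a ha h⟩

end MinModel

section PathCQ

variable {σ : Type} {m : ℕ} {ρ : ℕ → σ} {FL TL : Set ℕ} {v : ℕ}

@[simp]
theorem F_mem_pathCQ : At.F v ∈ pathCQ σ m ρ FL TL ↔ v ∈ FL := by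
  simp [pathCQ]

@[simp]
theorem T_mem_pathCQ : At.T v ∈ pathCQ σ m ρ FL TL ↔ v ∈ TL := by
  simp [pathCQ]

end PathCQ

theorem _root_.ZMod.exists_forall_eq_of_false_add_one {n : ℕ} [NeZero n] {f : ZMod n → Bool}
    (h : ∀ j, f j = false → f (j + 1) = false) : ∃ b, ∀ j, f j = b := by
  by_cases hf : ∃ j₀, f j₀ = false
  · obtain ⟨j₀, hj₀⟩ := hf
    have hk : ∀ k : ℕ, f (j₀ + k) = false := by
      intro k
      induction k with
      | zero => simpa using hj₀
      | succ k ih => simpa [add_assoc] using h _ ih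
    refine ⟨false, fun j => ?_⟩
    simpa using hk (j - j₀).val
  · simp only [not_exists, Bool.not_eq_false] at hf
    exact ⟨true, hf⟩

section Bike

variable {σ : Type} {n m : ℕ} {ρ : ℕ → σ} {FL TL : Set ℕ}
  {cT cF : Bool → ZMod n → ℕ} {iB jB : Bool → ZMod n} {ff₁ ff₂ tt₁ tt₂ : ℕ}
  {w : Bool} {j : ZMod n} {v : ℕ}

local notation "𝔹" => bike σ n (pathCQ σ m ρ FL TL) cT cF iB jB ff₁ ff₂ tt₁ tt₂

@[simp]
theorem F_mem_contactCopy {q : Set (At σ ℕ)} {t f : ℕ} :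
    At.F v ∈ contactCopy q t f ↔ At.F v ∈ q ∧ v ≠ f := by
  simp [contactCopy]

@[simp]
theorem T_mem_contactCopy {q : Set (At σ ℕ)} {t f : ℕ} :
    At.T v ∈ contactCopy q t f ↔ At.T v ∈ q ∧ v ≠ t := by
  simp [contactCopy]

theorem bwNorm_of_ne (hv : v ≠ cT w j) : bwNorm n cT cF w j v = (w, j, v) :=
  if_neg hv

theorem eq_or_eq_of_embF_eq_inl {y} (h : embF n cF iB ff₁ ff₂ v = Sum.inl y) :
    v = ff₁ ∨ v = ff₂ := by
  unfold embF at h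
  split_ifs at h with h₁ h₂
  exacts [Or.inl h₁, Or.inr h₂]

theorem eq_or_eq_of_embT_eq_inl {y} (h : embT n cF jB tt₁ tt₂ v = Sum.inl y) :
    v = tt₁ ∨ v = tt₂ := by
  unfold embT at h
  split_ifs at h with h₁ h₂
  exacts [Or.inl h₁, Or.inr h₂]

theorem map_mem_bike_of_mem_contactCopy {b : At σ ℕ}
    (hb : b ∈ contactCopy (pathCQ σ m ρ FL TL) (cT w j) (cF w j)) :
    b.map (fun v => Sum.inl (bwNorm n cT cF w j v)) ∈ 𝔹 :=
  Or.inl (Or.inl ⟨w, j, b, hb, rfl⟩)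

theorem A_contact_mem_bike (hne : cF w j ≠ cT w j) : At.A (Sum.inl (w, j, cF w j)) ∈ 𝔹 :=
  Or.inl (Or.inl ⟨w, j, .A (cF w j), Or.inr (Or.inl rfl), by simp [At.map, bwNorm_of_ne hne]⟩)

theorem F_contact_not_mem_bike (hFT : Disjoint FL TL) (hcT : ∀ w j, cT w j ∈ TL)
    (htt₁ : tt₁ ∈ TL) (htt₂ : tt₂ ∈ TL) : At.F (Sum.inl (w, j, cF w j)) ∉ 𝔹 := by
  rintro ((⟨w', j', b, hb, hbe⟩ | ⟨b, hb, hbe⟩) | ⟨b, hb, hbe⟩)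
  · obtain ⟨v, rfl, hv⟩ := At.map_eq_F_iff.1 hbe.symm
    simp only [F_mem_contactCopy, F_mem_pathCQ] at hb
    rw [bwNorm_of_ne (hFT.ne_of_mem hb.1 (hcT w' j'))] at hv
    obtain ⟨rfl, rfl, rfl⟩ : w' = w ∧ j' = j ∧ v = cF w j := by simpa using hv
    exact hb.2 rfl
  · obtain ⟨v, rfl, hv⟩ := At.map_eq_F_iff.1 hbe
    rcases eq_or_eq_of_embF_eq_inl hv with rfl | rfl <;> simp at hb
  · obtain ⟨v, rfl, hv⟩ := At.map_eq_F_iff.1 hbe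
    replace hb : v ∈ FL := by simpa using hb
    rcases eq_or_eq_of_embT_eq_inl hv with h | h
    exacts [hFT.ne_of_mem hb htt₁ h, hFT.ne_of_mem hb htt₂ h]

theorem T_contact_not_mem_bike (hFT : Disjoint FL TL) (hcF : ∀ w j, cF w j ∈ FL)
    (hff₁ : ff₁ ∈ FL) (hff₂ : ff₂ ∈ FL) : At.T (Sum.inl (w, j, cF w j)) ∉ 𝔹 := by
  rintro ((⟨w', j', b, hb, hbe⟩ | ⟨b, hb, hbe⟩) | ⟨b, hb, hbe⟩)
  · obtain ⟨v, rfl, hv⟩ := At.map_eq_T_iff.1 hbe.symm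
    simp only [T_mem_contactCopy, T_mem_pathCQ] at hb
    rw [bwNorm_of_ne hb.2] at hv
    obtain ⟨rfl, rfl, rfl⟩ : w' = w ∧ j' = j ∧ v = cF w j := by simpa using hv
    exact hFT.ne_of_mem (hcF _ _) hb.1 rfl
  · obtain ⟨v, rfl, hv⟩ := At.map_eq_T_iff.1 hbe
    replace hb : v ∈ TL := by simpa using hb
    rcases eq_or_eq_of_embF_eq_inl hv with h | h
    exacts [hFT.ne_of_mem hff₁ hb h.symm, hFT.ne_of_mem hff₂ hb h.symm]
  · obtain ⟨v, rfl, hv⟩ := At.map_eq_T_iff.1 hbe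
    rcases eq_or_eq_of_embT_eq_inl hv with rfl | rfl <;> simp at hb

end Bike

section Gadget

variable {σ : Type} {n m : ℕ} {ρ : ℕ → σ} {FL TL : Set ℕ} {V0 K : ℕ}
  {ψ : Fin K → Fin 3 → Bool × Fin V0} {cT cF : Fin V0 → Bool → ZMod n → ℕ}
  {iB jB : Fin V0 → Bool → ZMod n} {fB tB : Fin V0 → Bool → ℕ} {l : Fin 3 → ℕ}
  {gi : Fin K → Fin 3 → ZMod n} {p : Fin V0} {c : Fin K} {z : Fin 3}

local notation "𝔾" => gadget σ n m ρ FL TL ψ cT cF iB jB fB tB l gi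

def contact (cF : Fin V0 → Bool → ZMod n → ℕ) (p : Fin V0) (w : Bool) (j : ZMod n) :
    (Fin V0 × BInd n) ⊕ (Fin K × ℕ) :=
  Sum.inl (p, Sum.inl (w, j, cF p w j))

theorem cTgt_eq_contact :
    cTgt n ψ cF FL TL l gi c z = contact cF (ψ c z).2 (wSel FL TL ψ l c z) (gi c z) :=
  rfl

theorem wSel_eq (hFT : Disjoint FL TL) (hz : l z ∈ FL ∪ TL) :
    wSel FL TL ψ l c z = ((ψ c z).1 == decide (l z ∈ FL)) := by
  unfold wSel
  rcases hz with h | h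
  · have h' : l z ∉ TL := hFT.notMem_of_mem_left h
    cases (ψ c z).1 <;> simp [h, h']
  · have h' : l z ∉ FL := hFT.notMem_of_mem_right h
    cases (ψ c z).1 <;> simp [h, h']

@[simp]
theorem F_mem_clauseCopy {q : Set (At σ ℕ)} {v : ℕ} :
    At.F v ∈ clauseCopy q l ↔ At.F v ∈ q ∧ ∀ z, v ≠ l z := by
  simp [clauseCopy, Fin.forall_fin_succ]

@[simp]
theorem T_mem_clauseCopy {q : Set (At σ ℕ)} {v : ℕ} :
    At.T v ∈ clauseCopy q l ↔ At.T v ∈ q ∧ ∀ z, v ≠ l z := by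
  simp [clauseCopy, Fin.forall_fin_succ]

theorem exists_eq_of_embC_eq_inl {v : ℕ} {y} (h : embC n ψ cF FL TL l gi c v = Sum.inl y) :
    ∃ z, v = l z := by
  unfold embC at h
  split_ifs at h with h₀ h₁ h₂
  exacts [⟨0, h₀⟩, ⟨1, h₁⟩, ⟨2, h₂⟩]

theorem embC_apply (hl : Function.Injective l) (z : Fin 3) :
    embC n ψ cF FL TL l gi c (l z) = cTgt n ψ cF FL TL l gi c z := by
  fin_cases z <;> simp [embC, hl.eq_iff]

theorem map_mem_gadget_of_mem_bike {b : At σ (BInd n)}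
    (hb : b ∈ bike σ n (pathCQ σ m ρ FL TL) (cT p) (cF p) (iB p) (jB p)
      (fB p true) (fB p false) (tB p true) (tB p false)) :
    b.map (fun u => (Sum.inl (p, u) : (Fin V0 × BInd n) ⊕ (Fin K × ℕ))) ∈ 𝔾 :=
  Or.inl ⟨p, b, hb, rfl⟩

theorem F_mem_bike_of_F_inl_mem_gadget {x : BInd n} (h : At.F (Sum.inl (p, x)) ∈ 𝔾) :
    At.F x ∈ bike σ n (pathCQ σ m ρ FL TL) (cT p) (cF p) (iB p) (jB p)
      (fB p true) (fB p false) (tB p true) (tB p false) := by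
  rcases h with ⟨p', b, hb, hbe⟩ | ⟨c, b, hb, hbe⟩
  · obtain ⟨v, rfl, hv⟩ := At.map_eq_F_iff.1 hbe.symm
    obtain ⟨rfl, rfl⟩ : p' = p ∧ v = x := by simpa using hv
    exact hb
  · obtain ⟨v, rfl, hv⟩ := At.map_eq_F_iff.1 hbe.symm
    obtain ⟨z, rfl⟩ := exists_eq_of_embC_eq_inl hv
    exact ((F_mem_clauseCopy.1 hb).2 z rfl).elim

theorem T_mem_bike_of_T_inl_mem_gadget {x : BInd n} (h : At.T (Sum.inl (p, x)) ∈ 𝔾) :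
    At.T x ∈ bike σ n (pathCQ σ m ρ FL TL) (cT p) (cF p) (iB p) (jB p)
      (fB p true) (fB p false) (tB p true) (tB p false) := by
  rcases h with ⟨p', b, hb, hbe⟩ | ⟨c, b, hb, hbe⟩
  · obtain ⟨v, rfl, hv⟩ := At.map_eq_T_iff.1 hbe.symm
    obtain ⟨rfl, rfl⟩ : p' = p ∧ v = x := by simpa using hv
    exact hb
  · obtain ⟨v, rfl, hv⟩ := At.map_eq_T_iff.1 hbe.symm
    obtain ⟨z, rfl⟩ := exists_eq_of_embC_eq_inl hv
    exact ((T_mem_clauseCopy.1 hb).2 z rfl).elim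

theorem undecided_contact (hFT : Disjoint FL TL) (hcT : ∀ p w j, cT p w j ∈ TL)
    (hcF : ∀ p w j, cF p w j ∈ FL) (hfB : ∀ p w, fB p w ∈ FL) (htB : ∀ p w, tB p w ∈ TL)
    (p : Fin V0) (w : Bool) (j : ZMod n) : undecided 𝔾 (contact cF p w j) :=
  ⟨map_mem_gadget_of_mem_bike (A_contact_mem_bike (hFT.ne_of_mem (hcF p w j) (hcT p w j))),
    fun h => F_contact_not_mem_bike hFT (hcT p) (htB p true) (htB p false)
      (F_mem_bike_of_F_inl_mem_gadget h),
    fun h => T_contact_not_mem_bike hFT (hcF p) (hfB p true) (hfB p false)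
      (T_mem_bike_of_T_inl_mem_gadget h)⟩

end Gadget

section Matches

variable {σ : Type} {n m : ℕ} {ρ : ℕ → σ} {FL TL : Set ℕ} {V0 K : ℕ}
  {ψ : Fin K → Fin 3 → Bool × Fin V0} {cT cF : Fin V0 → Bool → ZMod n → ℕ}
  {iB jB : Fin V0 → Bool → ZMod n} {fB tB : Fin V0 → Bool → ℕ} {l : Fin 3 → ℕ}
  {gi : Fin K → Fin 3 → ZMod n} {col : (Fin V0 × BInd n) ⊕ (Fin K × ℕ) → Bool}
  {p : Fin V0} {w : Bool} {j : ZMod n}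

local notation "𝕢" => pathCQ σ m ρ FL TL
local notation "𝔾" => gadget σ n m ρ FL TL ψ cT cF iB jB fB tB l gi

theorem eq_or_eq_of_mem_of_not_mem_contactCopy {q : Set (At σ ℕ)} {t f : ℕ} {a : At σ ℕ}
    (ha : a ∈ q) (haS : a ∉ contactCopy q t f) : a = .T t ∨ a = .F f := by
  simp only [contactCopy, Set.mem_insert_iff, Set.mem_sdiff, Set.mem_singleton_iff] at haS
  tauto

theorem satCQ_of_wheel_step (hne : cF p w (j + 1) ≠ cT p w (j + 1))
    (hund : ∀ p w j, undecided 𝔾 (contact cF p w j))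
    (h₀ : col (contact cF p w j) = false) (h₁ : col (contact cF p w (j + 1)) = true) :
    (minModel 𝔾 col).satCQ 𝕢 := by
  refine satCQ_minModel_of_copy (contactCopy 𝕢 (cT p w (j + 1)) (cF p w (j + 1)))
    (fun v => Sum.inl (p, Sum.inl (bwNorm n (cT p) (cF p) w (j + 1) v)))
    (fun b hb => ?_) (fun a ha haS => ?_)
  · have h : _ ∈ 𝔾 := map_mem_gadget_of_mem_bike (map_mem_bike_of_mem_contactCopy hb)
    rwa [At.map_map] at h
  · rcases eq_or_eq_of_mem_of_not_mem_contactCopy ha haS with rfl | rfl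
    · have e : bwNorm n (cT p) (cF p) w (j + 1) (cT p w (j + 1)) = (w, j, cF p w j) := by
        simp [bwNorm]
      simp only [At.map, e]
      exact minModel_satAt_T (hund p w j) h₀
    · simp only [At.map, bwNorm_of_ne hne]
      exact minModel_satAt_F (hund p w (j + 1)) h₁

theorem satCQ_of_F_connections (hne : fB p true ≠ fB p false)
    (hund : ∀ p w j, undecided 𝔾 (contact cF p w j))
    (h₀ : col (contact cF p true (iB p true)) = true)
    (h₁ : col (contact cF p false (iB p false)) = true) :
    (minModel 𝔾 col).satCQ 𝕢 := by
  refine satCQ_minModel_of_copy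
    (insert (.A (fB p true)) (insert (.A (fB p false)) (𝕢 \ {.F (fB p true), .F (fB p false)})))
    (fun v => Sum.inl (p, embF n (cF p) (iB p) (fB p true) (fB p false) v))
    (fun b hb => ?_) (fun a ha haS => ?_)
  · have h : _ ∈ 𝔾 := map_mem_gadget_of_mem_bike (Or.inl (Or.inr ⟨b, hb, rfl⟩))
    rwa [At.map_map] at h
  · obtain rfl | rfl : a = .F (fB p true) ∨ a = .F (fB p false) := by
      simp only [Set.mem_insert_iff, Set.mem_sdiff, Set.mem_singleton_iff] at haS
      tauto
    · simp only [At.map, embF, if_true]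
      exact minModel_satAt_F (hund p true _) h₀
    · simp only [At.map, embF, hne.symm, if_true, if_false]
      exact minModel_satAt_F (hund p false _) h₁

theorem satCQ_of_T_connections (hne : tB p true ≠ tB p false)
    (hund : ∀ p w j, undecided 𝔾 (contact cF p w j))
    (h₀ : col (contact cF p true (jB p true)) = false)
    (h₁ : col (contact cF p false (jB p false)) = false) :
    (minModel 𝔾 col).satCQ 𝕢 := by
  refine satCQ_minModel_of_copy
    (insert (.A (tB p true)) (insert (.A (tB p false)) (𝕢 \ {.T (tB p true), .T (tB p false)})))
    (fun v => Sum.inl (p, embT n (cF p) (jB p) (tB p true) (tB p false) v))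
    (fun b hb => ?_) (fun a ha haS => ?_)
  · have h : _ ∈ 𝔾 := map_mem_gadget_of_mem_bike (Or.inr ⟨b, hb, rfl⟩)
    rwa [At.map_map] at h
  · obtain rfl | rfl : a = .T (tB p true) ∨ a = .T (tB p false) := by
      simp only [Set.mem_insert_iff, Set.mem_sdiff, Set.mem_singleton_iff] at haS
      tauto
    · simp only [At.map, embT, if_true]
      exact minModel_satAt_T (hund p true _) h₀
    · simp only [At.map, embT, hne.symm, if_true, if_false]
      exact minModel_satAt_T (hund p false _) h₁

theorem satCQ_of_clause (hl : Function.Injective l) (hFT : Disjoint FL TL)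
    (hund : ∀ p w j, undecided 𝔾 (contact cF p w j)) (c : Fin K)
    (hcol : ∀ z, col (cTgt n ψ cF FL TL l gi c z) = decide (l z ∈ FL)) :
    (minModel 𝔾 col).satCQ 𝕢 := by
  refine satCQ_minModel_of_copy (clauseCopy 𝕢 l) (embC n ψ cF FL TL l gi c)
    (fun b hb => Or.inr ⟨c, b, hb, rfl⟩) (fun a ha haS => ?_)
  obtain ⟨z, rfl | rfl⟩ : ∃ z, a = .F (l z) ∨ a = .T (l z) := by
    simp only [clauseCopy, Set.mem_insert_iff, Set.mem_sdiff, Set.mem_singleton_iff] at haS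
    simp only [Fin.exists_fin_succ, Fin.exists_fin_zero]
    tauto
  · simp only [At.map, embC_apply hl, cTgt_eq_contact]
    refine minModel_satAt_F (hund _ _ _) ?_
    rw [← cTgt_eq_contact, hcol z]
    simpa using ha
  · simp only [At.map, embC_apply hl, cTgt_eq_contact]
    refine minModel_satAt_T (hund _ _ _) ?_
    rw [← cTgt_eq_contact, hcol z]
    simpa using hFT.notMem_of_mem_right (T_mem_pathCQ.1 ha)

/-- `w == C p`: the wheel `W_•` of the bike of `p` has colour `C p`, and `W_∘` the other one. -/
theorem exists_wheel_colours [NeZero n] (hFT : Disjoint FL TL) (hcT : ∀ p w j, cT p w j ∈ TL)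
    (hcF : ∀ p w j, cF p w j ∈ FL) (hfne : ∀ p, fB p true ≠ fB p false)
    (htne : ∀ p, tB p true ≠ tB p false) (hund : ∀ p w j, undecided 𝔾 (contact cF p w j))
    (hcol : ¬ (minModel 𝔾 col).satCQ 𝕢) :
    ∃ C : Fin V0 → Bool, ∀ p w j, col (contact cF p w j) = (w == C p) := by
  have hmono : ∀ p w, ∃ b, ∀ j, col (contact cF p w j) = b := fun p w =>
    ZMod.exists_forall_eq_of_false_add_one fun j h₀ => by
      by_contra h₁
      exact hcol (satCQ_of_wheel_step (hFT.ne_of_mem (hcF _ _ _) (hcT _ _ _)) hund h₀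
        (by simpa using h₁))
  choose C hC using hmono
  refine ⟨fun p => C p true, fun p w j => ?_⟩
  have hopp : C p false = !C p true := by
    rcases h₁ : C p true <;> rcases h₂ : C p false
    · exact absurd
        (satCQ_of_T_connections (htne p) hund (by rw [hC, h₁]) (by rw [hC, h₂])) hcol
    · rfl
    · rfl
    · exact absurd
        (satCQ_of_F_connections (hfne p) hund (by rw [hC, h₁]) (by rw [hC, h₂])) hcol
  cases w <;> simp [hC, hopp]

end Matches

theorem statement_18_general {σ : Type} (m n : ℕ) (ρ : ℕ → σ) (FL TL : Set ℕ)
    {V0 K : ℕ} (ψ : Fin K → Fin 3 → Bool × Fin V0)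
    (cT cF : Fin V0 → Bool → ZMod n → ℕ) (iB jB : Fin V0 → Bool → ZMod n)
    (fB tB : Fin V0 → Bool → ℕ) (l : Fin 3 → ℕ) (gi : Fin K → Fin 3 → ZMod n)
    -- q is a twinless path 2-CQ with t₁ ≺ f₁
    (hdisj : ∀ i, ¬ (i ∈ FL ∧ i ∈ TL))
    -- size of the gadget wheels
    (hn : (K + 2) * (2 * m + 1) ≤ n)
    -- the wheels of the bikes: contacts are T-/F-nodes
    (hcT : ∀ p w j, cT p w j ∈ TL) (hcF : ∀ p w j, cF p w j ∈ FL)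
    -- the connecting copies of each bike use F-nodes c_F^• ≺ c_F^∘ and T-nodes c_T^• ≺ c_T^∘
    (hfB : ∀ p w, fB p w ∈ FL) (hfBlt : ∀ p, fB p true < fB p false)
    (htB : ∀ p w, tB p w ∈ TL) (htBlt : ∀ p, tB p true < tB p false)
    -- the special triple: ℓ₁ ≺ ℓ₂ ≺ ℓ₃, each an F-node or a T-node of q
    (hl12 : l 0 < l 1) (hl23 : l 1 < l 2)
    (hlFT : ∀ z, l z ∈ FL ∪ TL) :
    ¬ covACert (gadget σ n m ρ FL TL ψ cT cF iB jB fB tB l gi) (pathCQ σ m ρ FL TL) →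
      ∃ τ : Fin V0 → Bool, ∀ c : Fin K, ∃ z : Fin 3, τ (ψ c z).2 = (ψ c z).1 := by
  intro hcert
  obtain ⟨col, hcol⟩ := not_forall.1 hcert
  have : NeZero n := NeZero.of_pos (lt_of_lt_of_le (by positivity) hn)
  have hFT : Disjoint FL TL := Set.disjoint_left.2 fun i hF hT => hdisj i ⟨hF, hT⟩
  have hl : Function.Injective l :=
    (Fin.strictMono_iff_lt_succ.2 fun i => by fin_cases i; exacts [hl12, hl23]).injective
  have hund := undecided_contact hFT hcT hcF hfB htB (m := m) (ρ := ρ) (ψ := ψ) (iB := iB)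
    (jB := jB) (l := l) (gi := gi)
  obtain ⟨C, hC⟩ := exists_wheel_colours hFT hcT hcF (fun p => (hfBlt p).ne)
    (fun p => (htBlt p).ne) hund hcol
  refine ⟨fun p => !C p, fun c => ?_⟩
  obtain ⟨z, hz⟩ : ∃ z, col (cTgt n ψ cF FL TL l gi c z) ≠ decide (l z ∈ FL) := by
    by_contra! h
    exact hcol (satCQ_of_clause hl hFT hund c h)
  refine ⟨z, show (!C (ψ c z).2) = (ψ c z).1 from ?_⟩
  rw [cTgt_eq_contact, hC, wSel_eq hFT (hlFT z)] at hz
  revert hz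
  cases (ψ c z).1 <;> cases C (ψ c z).2 <;> cases decide (l z ∈ FL) <;> decide

/-- Let `q` be a twinless path `2`-CQ with `t₁ ≺ f₁`, let `ψ`
be a 3CNF with `K` clauses, let `n ≥ (K + 2)(2|q| + 1)`, and let `A_{q,ψ}` be
any `(ψ, n)`-gadget for `q` (bikes for the variables, clause copies glued by
(p1)/(p2), with the `c`-neighbourhoods pairwise disjoint and disjoint from the
`F`- and `T`-neighbourhoods of the bikes).  If `cov_A, A_{q,ψ} ⊭ q`, then `ψ`
is satisfiable. -/
theorem statement_18 {σ : Type} (m n : ℕ) (ρ : ℕ → σ) (FL TL : Set ℕ)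
    {V0 K : ℕ} (ψ : Fin K → Fin 3 → Bool × Fin V0)
    (cT cF : Fin V0 → Bool → ZMod n → ℕ) (iB jB : Fin V0 → Bool → ZMod n)
    (fB tB : Fin V0 → Bool → ℕ) (l : Fin 3 → ℕ) (gi : Fin K → Fin 3 → ZMod n)
    -- q is a twinless path 2-CQ with t₁ ≺ f₁
    (hm : 0 < m) (hFL : FL ⊆ Set.Iic m) (hTL : TL ⊆ Set.Iic m)
    (hdisj : ∀ i, ¬ (i ∈ FL ∧ i ∈ TL))
    (hF2 : FL.Nontrivial) (hT2 : TL.Nontrivial)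
    (ht1f1 : sInf TL < sInf FL)
    -- size of the gadget wheels
    (hn : (K + 2) * (2 * m + 1) ≤ n)
    -- the wheels of the bikes: contacts are T-/F-nodes
    (hcT : ∀ p w j, cT p w j ∈ TL) (hcF : ∀ p w j, cF p w j ∈ FL)
    -- the connecting copies of each bike use F-nodes c_F^• ≺ c_F^∘ and T-nodes c_T^• ≺ c_T^∘
    (hfB : ∀ p w, fB p w ∈ FL) (hfBlt : ∀ p, fB p true < fB p false)
    (htB : ∀ p w, tB p w ∈ TL) (htBlt : ∀ p, tB p true < tB p false)
    -- in each wheel, the F- and T-connections are at contact-distance > 2|q|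
    (hfar : ∀ p w, 2 * m < cdist (iB p w) (jB p w))
    -- the special triple: ℓ₁ ≺ ℓ₂ ≺ ℓ₃, each an F-node or a T-node of q
    (hl12 : l 0 < l 1) (hl23 : l 1 < l 2)
    (hlFT : ∀ z, l z ∈ FL ∪ TL)
    -- the c-neighbourhoods are pairwise disjoint ...
    (hcc : ∀ c z c' z', ¬ (c = c' ∧ z = z') →
      (ψ c z).2 = (ψ c' z').2 → wSel FL TL ψ l c z = wSel FL TL ψ l c' z' →
      2 * m < cdist (gi c z) (gi c' z'))
    -- ... and disjoint from the F- and T-neighbourhoods of the bikes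
    (hcb : ∀ c z, 2 * m < cdist (gi c z) (iB (ψ c z).2 (wSel FL TL ψ l c z)) ∧
      2 * m < cdist (gi c z) (jB (ψ c z).2 (wSel FL TL ψ l c z))) :
    ¬ covACert (gadget σ n m ρ FL TL ψ cT cF iB jB fB tB l gi) (pathCQ σ m ρ FL TL) →
      ∃ τ : Fin V0 → Bool, ∀ c : Fin K, ∃ z : Fin 3, τ (ψ c z).2 = (ψ c z).1 :=
  statement_18_general m n ρ FL TL ψ cT cF iB jB fB tB l gi hdisj hn hcT hcF hfB hfBlt htB htBlt
    hl12 hl23 hlFT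

end DS
end
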